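/- arXiv:math/0311453 — 5 statements merged into one kernel-verified Lean document; each statement's English description precedes it below -/
import Mathlib

section
/- For an odd prime p and an integer a not divisible by p, the sign of the permutation of Z/pZ induced by multiplication by a equals the Legendre symbol (a/p). -/
/-!
The maps `u ↦ sign (x ↦ u * x)` and the quadratic character are both nontrivial homomorphisms
from the cyclic group `Fˣ` to `ℤˣ = {±1}`, hence equal: a homomorphism from a cyclic group to
`{±1}` is determined by whether it kills a generator. The first one is nontrivial because a
generator of `Fˣ` fixes `0` and permutes `Fˣ` as a single cycle of the even length `|F| - 1`.
-/

open Equiv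

theorem MonoidHom.eq_of_ne_one_of_isCyclic {G : Type*} [Group G] [IsCyclic G] {f g : G →* ℤˣ}
    (hf : f ≠ 1) (hg : g ≠ 1) : f = g := by
  obtain ⟨γ, hγ⟩ := IsCyclic.exists_generator (α := G)
  have hclosure : Subgroup.closure {γ} = ⊤ := by
    rw [← Subgroup.zpowers_eq_closure]
    exact eq_top_iff.2 fun x _ => hγ x
  have apply_generator (h : G →* ℤˣ) (hh : h ≠ 1) : h γ = -1 :=
    (Int.units_eq_one_or _).resolve_left fun h1 =>
      hh (eq_of_eqOn_dense hclosure (by simpa using h1))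
  exact eq_of_eqOn_dense hclosure (by simp [apply_generator f hf, apply_generator g hg])

section Field

variable {F : Type*} [Field F]

theorem isCycle_toPerm_of_forall_mem_zpowers {g : Fˣ} (hg : ∀ u, u ∈ Subgroup.zpowers g)
    (hg1 : g ≠ 1) : (MulAction.toPerm g : Perm F).IsCycle := by
  refine ⟨1, by simpa [Units.smul_def] using hg1, fun y hy => ?_⟩
  have hy0 : y ≠ 0 := by rintro rfl; simp at hy
  obtain ⟨n, hn⟩ := hg (Units.mk0 y hy0)
  refine ⟨n, ?_⟩
  rw [← MulAction.toPermHom_apply, ← map_zpow]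
  simp [hn, Units.smul_def]

variable [Fintype F] [DecidableEq F]

theorem support_toPerm_eq_compl_zero {u : Fˣ} (hu : u ≠ 1) :
    (MulAction.toPerm u : Perm F).support = {0}ᶜ := by
  ext x
  simp only [Perm.mem_support, MulAction.toPerm_apply, Units.smul_def, smul_eq_mul,
    Finset.mem_compl, Finset.mem_singleton, ne_eq, mul_left_eq_self₀, Units.val_eq_one, hu,
    false_or]

theorem sign_toPerm_of_forall_mem_zpowers (hF : ringChar F ≠ 2) {g : Fˣ}
    (hg : ∀ u, u ∈ Subgroup.zpowers g) : Perm.sign (MulAction.toPerm g : Perm F) = -1 := by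
  have hg1 : g ≠ 1 := by
    rintro rfl
    obtain ⟨n, hn⟩ := hg (-1)
    exact Ring.neg_one_ne_one_of_char_ne_two hF (by simpa using congrArg Units.val hn.symm)
  have hcard := FiniteField.odd_card_of_char_ne_two hF
  rw [(isCycle_toPerm_of_forall_mem_zpowers hg hg1).sign, support_toPerm_eq_compl_zero hg1,
    Finset.card_compl, Finset.card_singleton, Even.neg_one_pow (by rw [Nat.even_iff]; omega)]

theorem sign_comp_toPermHom_eq_quadraticChar (hF : ringChar F ≠ 2) :
    Perm.sign.comp (MulAction.toPermHom Fˣ F) = (quadraticChar F).toUnitHom := by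
  obtain ⟨g, hg⟩ := IsCyclic.exists_generator (α := Fˣ)
  apply MonoidHom.eq_of_ne_one_of_isCyclic
  · intro h
    simpa [sign_toPerm_of_forall_mem_zpowers hF hg] using DFunLike.congr_fun h g
  · intro h
    refine quadraticChar_ne_one hF (MulChar.ext fun u => ?_)
    simpa using congrArg Units.val (DFunLike.congr_fun h u)

theorem sign_toPerm_eq_quadraticChar (hF : ringChar F ≠ 2) (u : Fˣ) :
    (Perm.sign (MulAction.toPerm u : Perm F) : ℤ) = quadraticChar F u := by
  rw [← MulChar.coe_toUnitHom, ← sign_comp_toPermHom_eq_quadraticChar hF]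
  rfl

end Field

/-- For an odd prime `p` and an integer `a` not divisible by `p`, the sign of the
permutation of `ℤ/pℤ` induced by multiplication by `a` equals the Legendre symbol `(a/p)`. -/
theorem zolotarev (p : ℕ) [Fact p.Prime] (hp : p ≠ 2) (a : ℤ) (ha : ¬ (p : ℤ) ∣ a) :
    ∃ σ : Equiv.Perm (ZMod p), (∀ x : ZMod p, σ x = (a : ZMod p) * x) ∧
      (Equiv.Perm.sign σ : ℤ) = legendreSym p a := by
  have ha' : (a : ZMod p) ≠ 0 := by rwa [Ne, ZMod.intCast_zmod_eq_zero_iff_dvd]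
  exact ⟨MulAction.toPerm (Units.mk0 _ ha'), fun _ => rfl,
    sign_toPerm_eq_quadraticChar (by rwa [ZMod.ringChar_zmod_n]) _⟩
end

section
/- For a finite group G of order n, the map sending a residue class a coprime to n to the sign of the permutation induced on the conjugacy classes of G by C ↦ {g^a : g ∈ C} is a well-defined group homomorphism from (Z/nZ)* to {±1}. -/
open scoped Classical

noncomputable instance conjClassesFintype {G : Type*} [Group G] [Fintype G] :
    Fintype (ConjClasses G) := Fintype.ofFinite _

/-! Since the exponent of `G` divides `n = |G|`, the power `g ^ a` depends only on `a mod n`, so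
powering is a monoid homomorphism from the multiplicative monoid `ℤ/nℤ` to the endomorphisms of
the set of conjugacy classes. Its restriction to units lands in the permutations, and composing
with the sign gives the homomorphism. -/

theorem Monoid.pow_eq_pow_of_natCast_eq {M : Type*} [Monoid M] {n a b : ℕ}
    (hn : exponent M ∣ n) (h : (a : ZMod n) = b) (x : M) : x ^ a = x ^ b := by
  have hab : a ≡ b [MOD exponent M] := ((ZMod.natCast_eq_natCast_iff _ _ _).1 h).of_dvd hn
  rw [pow_eq_mod_exponent, hab, ← pow_eq_mod_exponent]

namespace ConjClasses

variable {M : Type*} [Monoid M] {n : ℕ} [NeZero n]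

def powEnd (hn : Monoid.exponent M ∣ n) : ZMod n →* Function.End (ConjClasses M) where
  toFun a := Quotient.lift (fun x => ConjClasses.mk (x ^ a.val))
    fun _ _ h => mk_eq_mk_iff_isConj.2 (h.pow _)
  map_one' := by
    funext c
    obtain ⟨x, rfl⟩ := mk_surjective c
    exact congrArg ConjClasses.mk <|
      (Monoid.pow_eq_pow_of_natCast_eq hn (by simp) x).trans (pow_one x)
  map_mul' a b := by
    funext c
    obtain ⟨x, rfl⟩ := mk_surjective c
    refine congrArg ConjClasses.mk <|
      (Monoid.pow_eq_pow_of_natCast_eq hn (b := b.val * a.val) (by simp [mul_comm]) x).trans ?_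
    rw [pow_mul]

@[simp]
theorem powEnd_mk (hn : Monoid.exponent M ∣ n) (a : ZMod n) (x : M) :
    powEnd hn a (ConjClasses.mk x) = ConjClasses.mk (x ^ a.val) :=
  rfl

end ConjClasses

/-- For a finite group `G` of order `n`, sending a residue class `a` coprime to `n` to the
sign of the permutation induced on the conjugacy classes of `G` by `C ↦ {g^a : g ∈ C}`
is a well-defined group homomorphism `(ℤ/nℤ)ˣ → {±1}`. -/
theorem quadratic_symbol_hom (G : Type*) [Group G] [Fintype G] :
    ∃ φ : (ZMod (Fintype.card G))ˣ →* ℤˣ,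
      ∀ (a : ℕ) (ha : Nat.Coprime a (Fintype.card G)) (σ : Equiv.Perm (ConjClasses G)),
        (∀ g : G, σ (ConjClasses.mk g) = ConjClasses.mk (g ^ a)) →
          φ (ZMod.unitOfCoprime a ha) = Equiv.Perm.sign σ := by
  refine ⟨Equiv.Perm.sign.comp
    ((ConjClasses.powEnd Group.exponent_dvd_card).comp (Units.coeHom _)).toHomPerm,
    fun a ha σ hσ => ?_⟩
  rw [MonoidHom.comp_apply]
  congr 1
  ext c
  obtain ⟨g, rfl⟩ := ConjClasses.mk_surjective c
  simp [hσ]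
end

section
/- The discriminant d(G) of any finite group G satisfies d(G) ≡ 0 or 1 (mod 4). -/
open scoped Classical

/-- The discriminant of a finite group `G`:
`d(G) = (-1)^{r₂} |G|^{r₁} ∏ |C|⁻¹`, the product over the real conjugacy classes. -/
noncomputable def groupDisc (G : Type*) [Group G] [Fintype G] : ℚ :=
  (-1) ^ (Nat.card {C : ConjClasses G // C.carrier⁻¹ ≠ C.carrier} / 2) *
  (Fintype.card G : ℚ) ^ (Nat.card {C : ConjClasses G // C.carrier⁻¹ = C.carrier}) *
  (∏ C : {C : ConjClasses G // C.carrier⁻¹ = C.carrier},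
    (Nat.card (C : ConjClasses G).carrier : ℚ))⁻¹

namespace GroupDiscProof

variable {G : Type*} [Group G] [Fintype G]

lemma isConj_inv' {G : Type*} [Group G] {a b : G} (h : IsConj a b) : IsConj a⁻¹ b⁻¹ := by
  obtain ⟨c, hc⟩ := isConj_iff.mp h
  exact isConj_iff.mpr ⟨c, by rw [← hc]; group⟩

lemma carrier_mk_inv {G : Type*} [Group G] (g : G) :
    (ConjClasses.mk g).carrier⁻¹ = (ConjClasses.mk g⁻¹).carrier := by
  ext x
  simp only [Set.mem_inv, ConjClasses.mem_carrier_iff_mk_eq,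
    ConjClasses.mk_eq_mk_iff_isConj]
  constructor
  · intro h; simpa using isConj_inv' h
  · intro h; simpa using isConj_inv' h

noncomputable def invc {G : Type*} [Group G] : ConjClasses G → ConjClasses G :=
  Quotient.map Inv.inv fun _ _ h => isConj_inv' h

@[simp] lemma invc_mk {G : Type*} [Group G] (g : G) :
    invc (ConjClasses.mk g) = ConjClasses.mk g⁻¹ := rfl

lemma carrier_invc {G : Type*} [Group G] (C : ConjClasses G) :
    (invc C).carrier = C.carrier⁻¹ := by
  obtain ⟨g, rfl⟩ := C.exists_rep
  rw [invc_mk, carrier_mk_inv]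

@[simp] lemma invc_invc {G : Type*} [Group G] (C : ConjClasses G) : invc (invc C) = C := by
  obtain ⟨g, rfl⟩ := C.exists_rep
  simp

lemma card_carrier_invc {G : Type*} [Group G] (C : ConjClasses G) :
    Nat.card (invc C).carrier = Nat.card C.carrier := by
  rw [carrier_invc, ← Set.image_inv_eq_inv]
  exact Nat.card_image_of_injective inv_injective _

lemma card_carrier_ne_zero (C : ConjClasses G) : Nat.card C.carrier ≠ 0 := by
  obtain ⟨g, rfl⟩ := C.exists_rep
  have : Nonempty ((ConjClasses.mk g).carrier) := ⟨⟨g, ConjClasses.mem_carrier_mk⟩⟩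
  exact Nat.card_pos.ne'

/-- `z C = |G| / |C|`, the order of the centralizer of elements of `C`. -/
noncomputable def zC (C : ConjClasses G) : ℕ := Fintype.card G / Nat.card C.carrier

lemma card_stab_eq (g : G) :
    Nat.card (ConjClasses.mk g).carrier * Nat.card (MulAction.stabilizer (ConjAct G) g)
      = Fintype.card G := by
  have h := MulAction.card_orbit_mul_card_stabilizer_eq_card_group (G := ConjAct G) g
  simp only [← Nat.card_eq_fintype_card] at h
  rw [← ConjAct.orbit_eq_carrier_conjClasses, h,
    Nat.card_congr ConjAct.ofConjAct.toEquiv, Nat.card_eq_fintype_card]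

lemma zC_eq_card_stab (g : G) :
    zC (ConjClasses.mk g) = Nat.card (MulAction.stabilizer (ConjAct G) g) := by
  have h := card_stab_eq g
  have hne := card_carrier_ne_zero (G := G) (ConjClasses.mk g)
  rw [zC, ← h, Nat.mul_div_cancel_left _ (Nat.pos_of_ne_zero hne)]

lemma hz (C : ConjClasses G) : Nat.card C.carrier * zC C = Fintype.card G := by
  obtain ⟨g, rfl⟩ := C.exists_rep
  rw [zC_eq_card_stab, card_stab_eq]

lemma carrier_one {G : Type*} [Group G] : (ConjClasses.mk (1 : G)).carrier = {1} := by
  ext x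
  simp only [ConjClasses.mem_carrier_iff_mk_eq, ConjClasses.mk_eq_mk_iff_isConj,
    Set.mem_singleton_iff]
  exact isConj_one_left

lemma card_carrier_one {G : Type*} [Group G] :
    Nat.card (ConjClasses.mk (1 : G)).carrier = 1 := by
  rw [carrier_one]
  simp

lemma real_one {G : Type*} [Group G] :
    ((ConjClasses.mk (1 : G)).carrier)⁻¹ = (ConjClasses.mk (1 : G)).carrier := by
  rw [carrier_one]; simp

lemma zC_one : zC (ConjClasses.mk (1 : G)) = Fintype.card G := by
  rw [zC, card_carrier_one, Nat.div_one]

lemma odd_of_dvd {m n : ℕ} (h : m ∣ n) (hn : Odd n) : Odd m := by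
  rcases Nat.even_or_odd m with he | ho
  · exact absurd (he.two_dvd.trans h |> (even_iff_two_dvd).mpr) (Nat.not_even_iff_odd.mpr hn)
  · exact ho

lemma real_eq_one_of_odd (hodd : Odd (Fintype.card G)) {C : ConjClasses G}
    (h : C.carrier⁻¹ = C.carrier) : C = ConjClasses.mk 1 := by
  obtain ⟨g, rfl⟩ := C.exists_rep
  have hg : g⁻¹ ∈ (ConjClasses.mk g).carrier := by
    rw [← h, Set.mem_inv, inv_inv]
    exact ConjClasses.mem_carrier_mk
  have hginv : IsConj g⁻¹ g :=
    ConjClasses.mk_eq_mk_iff_isConj.mp (ConjClasses.mem_carrier_iff_mk_eq.mp hg)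
  obtain ⟨a, ha⟩ := isConj_iff.mp hginv
  -- ha : a * g⁻¹ * a⁻¹ = g
  have ha' : a * g * a⁻¹ = g⁻¹ := by
    have := congrArg Inv.inv ha
    simpa [mul_inv_rev, mul_assoc] using this
  have h2 : a ^ 2 * g * (a ^ 2)⁻¹ = g := by
    have e1 : a ^ 2 * g * (a ^ 2)⁻¹ = a * (a * g * a⁻¹) * a⁻¹ := by
      simp only [pow_two, mul_inv_rev, mul_assoc]
    rw [e1, ha']
    exact ha
  have hcomm2 : Commute (a ^ 2) g := by
    have h2' := h2
    rw [mul_inv_eq_iff_eq_mul] at h2'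
    exact h2'
  have ho : Odd (orderOf a) := odd_of_dvd orderOf_dvd_card hodd
  obtain ⟨j, hj⟩ := ho
  have hak : (a ^ 2) ^ (j + 1) = a := by
    rw [← pow_mul, show 2 * (j + 1) = orderOf a + 1 by omega, pow_succ,
      pow_orderOf_eq_one, one_mul]
  have hcomm : Commute a g := by
    rw [← hak]; exact hcomm2.pow_left _
  have hgg : g⁻¹ = g := by
    rw [← ha', hcomm.eq, mul_assoc, mul_inv_cancel, mul_one]
  have hg1 : g * g = 1 := inv_eq_iff_mul_eq_one.mp hgg
  have hdvd2 : orderOf g ∣ 2 := orderOf_dvd_of_pow_eq_one (by rw [pow_two]; exact hg1)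
  have hog : Odd (orderOf g) := odd_of_dvd orderOf_dvd_card hodd
  have : orderOf g = 1 := by
    rcases (Nat.dvd_prime Nat.prime_two).mp hdvd2 with h1 | h2
    · exact h1
    · rw [h2] at hog; exact absurd hog (by decide)
  rw [orderOf_eq_one_iff.mp this]

end GroupDiscProof

open GroupDiscProof

/-- The discriminant of any finite group is `≡ 0` or `1 (mod 4)`. -/

theorem groupDisc_mod_four (G : Type*) [Group G] [Fintype G] :
    ∃ d : ℤ, (d : ℚ) = groupDisc G ∧ (d % 4 = 0 ∨ d % 4 = 1) := by
  classical
  refine ⟨(-1) ^ (Nat.card {C : ConjClasses G // C.carrier⁻¹ ≠ C.carrier} / 2) *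
      ∏ C : {C : ConjClasses G // C.carrier⁻¹ = C.carrier}, (zC C.1 : ℤ), ?_, ?_⟩
  · -- cast equality
    have hP1 : (∏ C : {C : ConjClasses G // C.carrier⁻¹ = C.carrier},
        (Nat.card (C : ConjClasses G).carrier : ℚ)) ≠ 0 :=
      Finset.prod_ne_zero_iff.mpr fun C _ => by
        exact_mod_cast card_carrier_ne_zero (G := G) C.1
    have hprod : (∏ C : {C : ConjClasses G // C.carrier⁻¹ = C.carrier}, (zC C.1 : ℚ)) *
        ∏ C : {C : ConjClasses G // C.carrier⁻¹ = C.carrier},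
          (Nat.card (C : ConjClasses G).carrier : ℚ) =
        (Fintype.card G : ℚ) ^ (Nat.card {C : ConjClasses G // C.carrier⁻¹ = C.carrier}) := by
      rw [← Finset.prod_mul_distrib, Nat.card_eq_fintype_card]
      calc ∏ C : {C : ConjClasses G // C.carrier⁻¹ = C.carrier},
            ((zC C.1 : ℚ) * (Nat.card (C : ConjClasses G).carrier : ℚ))
          = ∏ _C : {C : ConjClasses G // C.carrier⁻¹ = C.carrier}, (Fintype.card G : ℚ) :=
            Finset.prod_congr rfl fun C _ => by rw [← Nat.cast_mul, mul_comm, hz C.1]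
        _ = _ := by rw [Finset.prod_const, Finset.card_univ]
    rw [← eq_mul_inv_iff_mul_eq₀ hP1] at hprod
    rw [groupDisc]
    push_cast
    rw [hprod]
    ring
  · have key : ((((-1 : ℤ)) ^ (Nat.card {C : ConjClasses G // C.carrier⁻¹ ≠ C.carrier} / 2) *
        ∏ C : {C : ConjClasses G // C.carrier⁻¹ = C.carrier}, (zC C.1 : ℤ) : ℤ) : ZMod 4) = 0 ∨
        ((((-1 : ℤ)) ^ (Nat.card {C : ConjClasses G // C.carrier⁻¹ ≠ C.carrier} / 2) *
        ∏ C : {C : ConjClasses G // C.carrier⁻¹ = C.carrier}, (zC C.1 : ℤ) : ℤ) : ZMod 4) = 1 := by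
      have h1p := real_one (G := G)
      rcases Nat.even_or_odd (Fintype.card G) with hev | hodd
      · -- |G| even: the product is divisible by 4
        left
        have hdvd : (4 : ℤ) ∣
            ∏ C : {C : ConjClasses G // C.carrier⁻¹ = C.carrier}, (zC C.1 : ℤ) := by
          by_cases h4 : 4 ∣ Fintype.card G
          · refine dvd_trans ?_ (Finset.dvd_prod_of_mem
              (fun C : {C : ConjClasses G // C.carrier⁻¹ = C.carrier} => (zC C.1 : ℤ))
              (Finset.mem_univ ⟨ConjClasses.mk 1, h1p⟩))
            show (4 : ℤ) ∣ (zC (ConjClasses.mk (1 : G)) : ℤ)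
            rw [zC_one]
            exact_mod_cast h4
          · haveI : Fact (Nat.Prime 2) := ⟨Nat.prime_two⟩
            obtain ⟨t, ht⟩ := exists_prime_orderOf_dvd_card 2 (even_iff_two_dvd.mp hev)
            have ht2 : t * t = 1 := by
              have := pow_orderOf_eq_one t; rwa [ht, pow_two] at this
            have htinv : t⁻¹ = t := inv_eq_of_mul_eq_one_right ht2
            have htne : t ≠ 1 := by
              intro h; rw [h, orderOf_one] at ht; exact absurd ht (by norm_num)
            have h2p : (ConjClasses.mk t).carrier⁻¹ = (ConjClasses.mk t).carrier := by
              rw [carrier_mk_inv, htinv]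
            have hne : (⟨ConjClasses.mk t, h2p⟩ :
                {C : ConjClasses G // C.carrier⁻¹ = C.carrier}) ≠ ⟨ConjClasses.mk 1, h1p⟩ := by
              intro hx
              exact htne (isConj_one_left.mp (ConjClasses.mk_eq_mk_iff_isConj.mp
                (congrArg Subtype.val hx)))
            have hz1 : 2 ∣ zC (ConjClasses.mk (1 : G)) := by
              rw [zC_one]; exact even_iff_two_dvd.mp hev
            have hz2 : 2 ∣ zC (ConjClasses.mk t) := by
              rw [zC_eq_card_stab]
              have hmem : ConjAct.toConjAct t ∈ MulAction.stabilizer (ConjAct G) t := by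
                rw [MulAction.mem_stabilizer_iff, ConjAct.toConjAct_smul, ht2, one_mul, htinv]
              have horder : orderOf (⟨ConjAct.toConjAct t, hmem⟩ :
                  MulAction.stabilizer (ConjAct G) t) = 2 := by
                rw [Subgroup.orderOf_mk]
                refine orderOf_eq_prime ?_ ?_
                · rw [pow_two, ← map_mul, ht2, map_one]
                · intro h
                  exact htne (ConjAct.toConjAct.injective (by rw [h, map_one]))
              rw [Nat.card_eq_fintype_card, ← horder]
              exact orderOf_dvd_card
            rw [← Finset.mul_prod_erase Finset.univ _
                (Finset.mem_univ (⟨ConjClasses.mk 1, h1p⟩ :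
                  {C : ConjClasses G // C.carrier⁻¹ = C.carrier})),
              ← Finset.mul_prod_erase _ _
                (Finset.mem_erase.mpr ⟨hne, Finset.mem_univ _⟩), ← mul_assoc]
            refine Dvd.dvd.mul_right ?_ _
            have := mul_dvd_mul (Int.natCast_dvd_natCast.mpr hz1) (Int.natCast_dvd_natCast.mpr hz2)
            exact_mod_cast this
        exact (ZMod.intCast_zmod_eq_zero_iff_dvd _ 4).mpr
          (by exact_mod_cast hdvd.mul_left _)
      · right
        have h4 : (4 : ZMod 4) = 0 := by decide
        haveI hu : Unique {C : ConjClasses G // C.carrier⁻¹ = C.carrier} :=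
          { default := ⟨ConjClasses.mk 1, h1p⟩
            uniq := fun C => Subtype.ext (real_eq_one_of_odd hodd C.2) }
        have hd : ((default : {C : ConjClasses G // C.carrier⁻¹ = C.carrier}) :
            ConjClasses G) = ConjClasses.mk 1 := real_eq_one_of_odd hodd (default : {C : ConjClasses G // C.carrier⁻¹ = C.carrier}).2
        have hprod1 : (∏ C : {C : ConjClasses G // C.carrier⁻¹ = C.carrier}, (zC C.1 : ℤ))
            = (Fintype.card G : ℤ) := by
          rw [Fintype.prod_unique]
          rw [hd, zC_one]
        -- the class-size sum
        have hsum : ∑ C : ConjClasses G, Nat.card C.carrier = Fintype.card G := by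
          rw [← sum_conjClasses_card_eq_card]
          exact Finset.sum_congr rfl fun C _ => by
            rw [Set.toFinset_card, Nat.card_eq_fintype_card]
        -- involution on non-real classes
        have hNreal : ∀ C : {C : ConjClasses G // C.carrier⁻¹ ≠ C.carrier},
            (invc C.1).carrier⁻¹ ≠ (invc C.1).carrier := by
          intro C hC
          apply C.2
          rw [carrier_invc, inv_inv] at hC
          exact hC.symm
        set ι : {C : ConjClasses G // C.carrier⁻¹ ≠ C.carrier} →
            {C : ConjClasses G // C.carrier⁻¹ ≠ C.carrier} :=
          fun C => ⟨invc C.1, hNreal C⟩ with hιdef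
        have hι2 : ∀ C, ι (ι C) = C := fun C => Subtype.ext (invc_invc C.1)
        have hιne : ∀ C, ι C ≠ C := by
          intro C hC
          have h0 : invc C.1 = C.1 := congrArg Subtype.val hC
          have h1 := congrArg ConjClasses.carrier h0
          rw [carrier_invc] at h1
          exact C.2 h1
        have hoddC : ∀ C : ConjClasses G, Odd (Nat.card C.carrier) :=
          fun C => odd_of_dvd ⟨_, (hz C).symm⟩ hodd
        -- even number of non-real classes
        have hevenN : 2 ∣ Fintype.card {C : ConjClasses G // C.carrier⁻¹ ≠ C.carrier} := by
          have h0 : ∑ _C : {C : ConjClasses G // C.carrier⁻¹ ≠ C.carrier}, (1 : ZMod 2) = 0 :=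
            Finset.sum_ninvolution ι (fun a => by decide) (fun a _ => hιne a)
              (fun a => Finset.mem_univ _) hι2
          rw [Finset.sum_const, Finset.card_univ, nsmul_eq_mul, mul_one] at h0
          exact (ZMod.natCast_eq_zero_iff _ 2).mp h0
        -- sum of class sizes over non-real classes mod 4
        have hs0 : ∑ C : {C : ConjClasses G // C.carrier⁻¹ ≠ C.carrier},
            ((Nat.card (C : ConjClasses G).carrier : ZMod 4) - 1) = 0 := by
          refine Finset.sum_ninvolution ι ?_ (fun a _ => hιne a)
            (fun a => Finset.mem_univ _) hι2
          intro a
          have hcc : Nat.card ((ι a : {C : ConjClasses G // C.carrier⁻¹ ≠ C.carrier}) :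
              ConjClasses G).carrier = Nat.card (a : ConjClasses G).carrier :=
            card_carrier_invc a.1
          rw [hcc]
          obtain ⟨m, hm⟩ := hoddC a.1
          rw [hm]
          push_cast
          linear_combination (m : ZMod 4) * h4
        have hsN : ∑ C : {C : ConjClasses G // C.carrier⁻¹ ≠ C.carrier},
            (Nat.card (C : ConjClasses G).carrier : ZMod 4)
            = (Fintype.card {C : ConjClasses G // C.carrier⁻¹ ≠ C.carrier} : ZMod 4) := by
          rw [Finset.sum_sub_distrib] at hs0
          rw [Finset.sum_const, Finset.card_univ, nsmul_eq_mul, mul_one] at hs0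
          exact sub_eq_zero.mp hs0
        -- the real-class sum is 1
        have hsR : ∑ C : {C : ConjClasses G // C.carrier⁻¹ = C.carrier},
            (Nat.card (C : ConjClasses G).carrier : ZMod 4) = 1 := by
          rw [Fintype.sum_unique, hd, card_carrier_one, Nat.cast_one]
        -- |G| ≡ 1 + #nonreal mod 4
        have hsum4 : (Fintype.card G : ZMod 4) =
            1 + (Fintype.card {C : ConjClasses G // C.carrier⁻¹ ≠ C.carrier} : ZMod 4) := by
          have h0 : ((∑ C : ConjClasses G, Nat.card C.carrier : ℕ) : ZMod 4)
              = (Fintype.card G : ZMod 4) := by rw [hsum]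
          push_cast at h0
          rw [← h0]
          have hsplit : ∑ C : ConjClasses G, (Nat.card C.carrier : ZMod 4) =
              (∑ C ∈ Finset.univ.filter (fun C : ConjClasses G => C.carrier⁻¹ = C.carrier),
                (Nat.card C.carrier : ZMod 4)) +
              ∑ C ∈ Finset.univ.filter (fun C : ConjClasses G => ¬ C.carrier⁻¹ = C.carrier),
                (Nat.card C.carrier : ZMod 4) :=
            (Finset.sum_filter_add_sum_filter_not _ _ _).symm
          rw [hsplit]
          congr 1
          · rw [← hsR]
            exact (Finset.sum_subtype _ (fun x => by simp) _)
          · rw [← hsN]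
            exact (Finset.sum_subtype _ (fun x => by simp) _)
        -- finish
        rw [hprod1]
        push_cast
        rw [hsum4]
        obtain ⟨s, hs2⟩ := hevenN
        have he' : Nat.card {C : ConjClasses G // C.carrier⁻¹ ≠ C.carrier} / 2 = s := by
          rw [Nat.card_eq_fintype_card, hs2, Nat.mul_div_cancel_left _ (by norm_num)]
        rw [he', hs2]
        push_cast
        rcases Nat.even_or_odd s with ⟨u, hu⟩ | ⟨u, hu⟩
        · rw [hu, Even.neg_one_pow ⟨u, rfl⟩, one_mul]
          push_cast
          linear_combination (u : ZMod 4) * h4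
        · rw [hu, Odd.neg_one_pow ⟨u, rfl⟩]
          push_cast
          linear_combination (-1 - (u : ZMod 4)) * h4
    rcases key with h | h
    · left
      have h4 := (ZMod.intCast_zmod_eq_zero_iff_dvd _ 4).mp h
      omega
    · right
      have h4 := (ZMod.intCast_eq_intCast_iff' _ 1 4).mp (by rw [h]; norm_num)
      simpa using h4
end

section
/- For a finite group G of order n and any integer a coprime to n, the Galois automorphism σ_a applied to det M multiplies it by the quadratic symbol (a/G): σ_a(det M) = (a/G) · det M, where (a/G) is the sign of the permutation induced by g ↦ g^a on the conjugacy classes. -/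
open scoped Classical

open Module Polynomial LinearMap

lemma pow_apply_of_mem_eigenspace {V : Type*} [AddCommGroup V] [Module ℂ V]
    (f : Module.End ℂ V) (μ : ℂ) {x : V} (hx : x ∈ f.eigenspace μ) (k : ℕ) :
    (f ^ k) x = μ ^ k • x := by
  induction k with
  | zero => simp
  | succ m ih =>
      rw [pow_succ, Module.End.mul_apply, Module.End.mem_eigenspace_iff.mp hx, map_smul, ih,
        smul_smul, ← pow_succ']

lemma trace_pow_of_finOrder {V : Type*} [AddCommGroup V] [Module ℂ V] [FiniteDimensional ℂ V]
    (f : Module.End ℂ V) (n : ℕ) (hn : 0 < n) (hfn : f ^ n = 1) (b : ℕ)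
    (σ : ℂ →+* ℂ) (hσ : ∀ μ : ℂ, μ ^ n = 1 → σ μ = μ ^ b) :
    σ (LinearMap.trace ℂ V f) = LinearMap.trace ℂ V (f ^ b) := by
  have hsq : Squarefree (X ^ n - C (1 : ℂ)) := by
    refine (Polynomial.separable_X_pow_sub_C 1 ?_ one_ne_zero).squarefree
    exact_mod_cast Nat.cast_ne_zero.mpr hn.ne'
  have hs : f.IsSemisimple :=
    Module.End.isSemisimple_of_squarefree_aeval_eq_zero hsq (by simp [hfn])
  have hsup : ⨆ μ, f.eigenspace μ = ⊤ := by
    have h := Module.End.iSup_maxGenEigenspace_eq_top f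
    simpa only [hs.isFinitelySemisimple.maxGenEigenspace_eq_eigenspace] using h
  have hInt : DirectSum.IsInternal f.eigenspace :=
    DirectSum.isInternal_submodule_of_iSupIndep_of_iSup_eq_top
      f.eigenspaces_iSupIndep hsup
  have heig : ∀ μ : ℂ, f.eigenspace μ ≠ ⊥ → μ ^ n = 1 := by
    intro μ hμ
    obtain ⟨v, hv, hv0⟩ := Module.End.HasEigenvalue.exists_hasEigenvector hμ
    have h1 : (f ^ n) v = μ ^ n • v := pow_apply_of_mem_eigenspace f μ hv n
    rw [hfn] at h1
    replace h1 : v = μ ^ n • v := by simpa using h1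
    have : (μ ^ n - 1) • v = 0 := by rw [sub_smul, one_smul, ← h1]; simp
    rcases smul_eq_zero.mp this with h | h
    · exact sub_eq_zero.mp h
    · exact absurd h hv0
  have hfin : {μ | f.eigenspace μ ≠ ⊥}.Finite := by
    refine Set.Finite.subset (Polynomial.nthRootsFinset n (1 : ℂ)).finite_toSet ?_
    intro μ hμ
    exact (Polynomial.mem_nthRootsFinset hn (1 : ℂ)).mpr (heig μ hμ)
  have hmf : ∀ μ : ℂ, Set.MapsTo f (f.eigenspace μ) (f.eigenspace μ) := by
    intro μ x hx
    rw [SetLike.mem_coe, Module.End.mem_eigenspace_iff.mp hx]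
    exact Submodule.smul_mem _ _ hx
  have hmb : ∀ μ : ℂ, Set.MapsTo (f ^ b) (f.eigenspace μ) (f.eigenspace μ) := by
    intro μ x hx
    rw [SetLike.mem_coe, pow_apply_of_mem_eigenspace f μ hx b]
    exact Submodule.smul_mem _ _ hx
  have hres1 : ∀ μ : ℂ, LinearMap.trace ℂ (f.eigenspace μ) (f.restrict (hmf μ)) =
      μ * (finrank ℂ (f.eigenspace μ) : ℂ) := by
    intro μ
    have : f.restrict (hmf μ) = μ • LinearMap.id := by
      ext x
      rw [show ((f.restrict (hmf μ)) x : V) = f x from rfl, Module.End.mem_eigenspace_iff.mp x.2]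
      simp
    rw [this, map_smul, trace_id, smul_eq_mul]
  have hres2 : ∀ μ : ℂ, LinearMap.trace ℂ (f.eigenspace μ) ((f ^ b).restrict (hmb μ)) =
      μ ^ b * (finrank ℂ (f.eigenspace μ) : ℂ) := by
    intro μ
    have : (f ^ b).restrict (hmb μ) = (μ ^ b) • LinearMap.id := by
      ext x
      rw [show (((f ^ b).restrict (hmb μ)) x : V) = (f ^ b) x from rfl, pow_apply_of_mem_eigenspace f μ x.2 b]
      simp
    rw [this, map_smul, trace_id, smul_eq_mul]
  rw [LinearMap.trace_eq_sum_trace_restrict' hInt hfin hmf,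
    LinearMap.trace_eq_sum_trace_restrict' hInt hfin hmb]
  rw [map_sum]
  refine Finset.sum_congr rfl fun μ hμ => ?_
  rw [hres1, hres2, map_mul, map_natCast, hσ μ (heig μ (hfin.mem_toFinset.mp hμ))]

lemma char_sigma {G : Type} [Group G] [Fintype G] (W : FDRep ℂ G) (g : G) (b : ℕ)
    (σ : ℂ →+* ℂ) (hσ : ∀ μ : ℂ, μ ^ Fintype.card G = 1 → σ μ = μ ^ b) :
    σ (W.character g) = W.character (g ^ b) := by
  have h := trace_pow_of_finOrder (W.ρ g) (Fintype.card G) Fintype.card_pos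
    (by rw [← map_pow, pow_card_eq_one, map_one]) b σ hσ
  have h2 := congrArg (LinearMap.trace ℂ W.V) (map_pow W.ρ g b)
  exact h.trans h2.symm

/-- For a finite group `G` of order `n` and `a` coprime to `n`, the Galois automorphism
`σ_a` multiplies the determinant of the character table by the quadratic symbol `(a/G)`,
the sign of the permutation induced by `g ↦ g^a` on the conjugacy classes. -/
theorem galois_det_character_table (G : Type) [Group G] [Fintype G]
    (ι : Type) [Fintype ι] [DecidableEq ι]
    (χ : ι → G → ℂ)
    (hirr : ∀ i : ι, ∃ W : FDRep ℂ G, CategoryTheory.Simple W ∧ W.character = χ i)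
    (hinj : Function.Injective χ)
    (hcompl : ∀ W : FDRep ℂ G, CategoryTheory.Simple W → ∃ i : ι, W.character = χ i)
    (t : ι → G) (ht : Function.Bijective (fun i : ι => ConjClasses.mk (t i)))
    (a : ℤ) (ha : IsCoprime a (Fintype.card G : ℤ))
    (ζ : ℂ) (hζ : IsPrimitiveRoot ζ (Fintype.card G))
    (σ : ℂ →+* ℂ) (hσ : σ ζ = ζ ^ a)
    (π : Equiv.Perm (ConjClasses G))
    (hπ : ∀ g : G, π (ConjClasses.mk g) = ConjClasses.mk (g ^ a)) :
    σ ((Matrix.of fun i j : ι => χ i (t j)).det) =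
      ((Equiv.Perm.sign π : ℤ) : ℂ) * (Matrix.of fun i j : ι => χ i (t j)).det := by
  classical
  set n := Fintype.card G with hn
  have hn0 : 0 < n := Fintype.card_pos
  haveI : NeZero n := ⟨hn0.ne'⟩
  set b : ℕ := (a % (n : ℤ)).toNat with hbdef
  have hbz : (b : ℤ) = a % n :=
    Int.toNat_of_nonneg (Int.emod_nonneg a (by exact_mod_cast hn0.ne'))
  have hadecomp : a = (b : ℤ) + (n : ℤ) * (a / n) := by
    rw [hbz]; exact (Int.emod_add_mul_ediv a n).symm
  have hg : ∀ g : G, g ^ a = g ^ b := by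
    intro g
    conv_lhs => rw [hadecomp]
    rw [zpow_add, zpow_mul, zpow_natCast, zpow_natCast, pow_card_eq_one, one_zpow, mul_one]
  have hz : ζ ^ a = ζ ^ b := by
    have hζ0 : ζ ≠ 0 := hζ.ne_zero hn0.ne'
    conv_lhs => rw [hadecomp]
    rw [zpow_add₀ hζ0, zpow_mul, zpow_natCast, zpow_natCast, hζ.pow_eq_one, one_zpow, mul_one]
  have hσ' : ∀ μ : ℂ, μ ^ n = 1 → σ μ = μ ^ b := by
    intro μ hμ
    obtain ⟨i, -, rfl⟩ := hζ.eq_pow_of_pow_eq_one hμ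
    rw [map_pow, hσ, hz, ← pow_mul, mul_comm, pow_mul]
  have hkey : ∀ (i : ι) (g : G), σ (χ i g) = χ i (g ^ a) := by
    intro i g
    obtain ⟨W, _, hW⟩ := hirr i
    rw [← hW, hg]
    exact char_sigma W g b σ hσ'
  have hclass : ∀ (i : ι) (x y : G), ConjClasses.mk x = ConjClasses.mk y → χ i x = χ i y := by
    intro i x y hxy
    obtain ⟨W, _, hW⟩ := hirr i
    obtain ⟨c, hc⟩ := isConj_iff.mp (ConjClasses.mk_eq_mk_iff_isConj.mp hxy)
    rw [← hW, ← hc]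
    exact (FDRep.char_conj W x c).symm
  let e : ι ≃ ConjClasses G := Equiv.ofBijective _ ht
  let τ : Equiv.Perm ι := e.symm.permCongr π
  have hsign : Equiv.Perm.sign τ = Equiv.Perm.sign π := Equiv.Perm.sign_permCongr e.symm π
  have hτ : ∀ (i : ι) (j : ι), χ i (t (τ j)) = χ i (t j ^ a) := by
    intro i j
    apply hclass
    have h1 : ConjClasses.mk (t (τ j)) = π (ConjClasses.mk (t j)) := by
      have : ConjClasses.mk (t (τ j)) = e (τ j) := rfl
      rw [this]
      show e (e.symm (π (e j))) = π (ConjClasses.mk (t j))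
      rw [e.apply_symm_apply]
      rfl
    rw [h1, hπ]
  rw [RingHom.map_det, RingHom.mapMatrix_apply]
  have hM : (Matrix.of fun i j : ι => χ i (t j)).map σ
      = (Matrix.of fun i j : ι => χ i (t j)).submatrix _root_.id τ := by
    ext i j
    simp only [Matrix.map_apply, Matrix.submatrix_apply, Matrix.of_apply, _root_.id_eq]
    rw [hkey, ← hτ]
  rw [hM, Matrix.det_permute' τ, hsign]
end

section
/- Let G be a finite cyclic group of order n with 4 | n. Then for every integer a coprime to n, the sign of the permutation of G induced by g ↦ g^a equals (-1)^((a-1)/2). -/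
open scoped Classical
open Equiv Equiv.Perm

def zmodFinEquiv (m : ℕ) [NeZero m] : ZMod m ≃ Fin m where
  toFun x := ⟨x.val, x.val_lt⟩
  invFun i := (i.val : ZMod m)
  left_inv x := ZMod.natCast_rightInverse x
  right_inv i := by
    ext
    simp [ZMod.val_cast_of_lt i.isLt]

lemma sign_addLeft_one_zmod (k : ℕ) (hk : 1 < k + 1) :
    Equiv.Perm.sign (Equiv.addLeft (1 : ZMod (k+1))) = (-1 : ℤˣ) ^ k := by
  have h : (zmodFinEquiv (k+1)).permCongr (Equiv.addLeft (1 : ZMod (k+1)))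
      = finRotate (k+1) := by
    haveI : Fact (1 < k + 1) := ⟨hk⟩
    ext i
    have h1 : ((i.val : ZMod (k+1))).val = i.val := ZMod.val_cast_of_lt i.isLt
    have h2 : (1 : Fin (k+1)).val = 1 := by
      rw [Fin.val_one']; exact Nat.mod_eq_of_lt hk
    simp only [permCongr_apply, zmodFinEquiv, Equiv.coe_fn_mk, Equiv.coe_fn_symm_mk,
      coe_addLeft, finRotate_succ_apply]
    rw [ZMod.val_add, h1, ZMod.val_one, Fin.val_add, h2, Nat.add_comm 1 i.val]
  rw [← Equiv.Perm.sign_permCongr (zmodFinEquiv (k+1)), h, sign_finRotate, Nat.add_sub_cancel]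

lemma sign_addLeft_int (m : ℕ) [NeZero m] (hme : Even m) (c : ℤ) :
    Equiv.Perm.sign (Equiv.addLeft ((c : ZMod m))) = (-1 : ℤˣ) ^ c := by
  obtain ⟨k, rfl⟩ : ∃ k, m = k + 1 :=
    ⟨m - 1, by have := Nat.pos_of_ne_zero (NeZero.ne m); omega⟩
  have h1 : (Equiv.addLeft ((c : ZMod (k+1)))) = (Equiv.addLeft (1 : ZMod (k+1))) ^ c := by
    rw [Equiv.zsmul_addLeft]
    congr 1
    simp
  have hk : Odd k := by
    rcases hme with ⟨j, hj⟩
    exact ⟨j - 1, by omega⟩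
  have hk1 : 1 < k + 1 := by obtain ⟨t, ht⟩ := hk; omega
  rw [h1, map_zpow, sign_addLeft_one_zmod k hk1, Odd.neg_one_pow hk]

lemma sign_mul_zmod (n m : ℕ) (hnm : n = 2 * m) (hm0 : 0 < m) (hme : Even m) (a : ℤ)
    (hodd : Odd a) [NeZero n] (hu : IsUnit ((a : ZMod n))) :
    Equiv.Perm.sign (Units.mulLeft hu.unit) = (-1 : ℤˣ) ^ ((a - 1) / 2) := by
  subst hnm
  haveI : NeZero m := ⟨hm0.ne'⟩
  have hum : IsUnit ((a : ZMod m)) := by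
    have h := hu.map (ZMod.castHom (dvd_mul_left m 2) (ZMod m))
    rwa [map_intCast] at h
  set c : ZMod m := (((a - 1) / 2 : ℤ) : ZMod m) with hc
  set f0 : Equiv.Perm (ZMod m) := Units.mulLeft hum.unit with hf0
  set f1 : Equiv.Perm (ZMod m) := Equiv.addLeft c * f0 with hf1
  set P : Equiv.Perm (Bool × ZMod m) :=
    Equiv.Perm.prodExtendRight false f0 * Equiv.Perm.prodExtendRight true f1 with hP
  have hcard : Fintype.card (Bool × ZMod m) = Fintype.card (ZMod (2 * m)) := by
    simp [ZMod.card]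
    try ring
  set efun : Bool × ZMod m → ZMod (2 * m) :=
    fun p => ((2 * p.2.val + cond p.1 1 0 : ℕ) : ZMod (2 * m)) with hefun
  have hval : ∀ p : Bool × ZMod m, (efun p).val = 2 * p.2.val + cond p.1 1 0 := by
    intro p
    have hlt := p.2.val_lt
    rw [hefun]
    rw [ZMod.val_natCast, Nat.mod_eq_of_lt (by cases p.1 <;> simp <;> omega)]
  have hinj : Function.Injective efun := by
    intro p q h
    have h2 := congrArg ZMod.val h
    rw [hval, hval] at h2
    have h3 : p.2.val = q.2.val ∧ p.1 = q.1 := by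
      cases hp : p.1 <;> cases hq : q.1 <;> rw [hp, hq] at h2 <;> simp at h2 ⊢ <;> omega
    exact Prod.ext h3.2 (ZMod.val_injective m h3.1)
  set e : (Bool × ZMod m) ≃ ZMod (2 * m) :=
    Equiv.ofBijective efun ((Fintype.bijective_iff_injective_and_card efun).2 ⟨hinj, hcard⟩)
    with he
  have heapp : ∀ p, e p = efun p := fun p => rfl
  have key : ∀ z : ℤ, ((2 * ((z : ZMod m)).val : ℕ) : ZMod (2 * m)) = ((2 * z : ℤ) : ZMod (2 * m)) := by
    intro z
    have h1 : (((z : ZMod m)).val : ℤ) = z % m := ZMod.val_intCast z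
    have h2 : ((2 * ((z : ZMod m)).val : ℕ) : ZMod (2 * m))
        = ((2 * ((((z : ZMod m)).val : ℤ)) : ℤ) : ZMod (2 * m)) := by push_cast; ring
    rw [h2, h1, ZMod.intCast_eq_intCast_iff]
    have h3 : ((2 * m : ℕ) : ℤ) ∣ 2 * z - 2 * (z % m) := ⟨z / m, by push_cast [Int.emod_def]; ring⟩
    exact (Int.modEq_iff_dvd.2 h3)
  -- value of f0
  have hf0y : ∀ y : ZMod m, f0 y = ((a * (y.val : ℤ) : ℤ) : ZMod m) := by
    intro y
    have hy : ((y.val : ℕ) : ZMod m) = y := ZMod.natCast_rightInverse y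
    rw [hf0]
    show (hum.unit : ZMod m) * y = _
    rw [IsUnit.unit_spec]
    have h9 : ((a * (y.val : ℤ) : ℤ) : ZMod m) = (a : ZMod m) * ((y.val : ℕ) : ZMod m) := by
      push_cast; ring
    rw [h9, hy]
  have hf1y : ∀ y : ZMod m, f1 y = ((((a - 1) / 2 + a * (y.val : ℤ)) : ℤ) : ZMod m) := by
    intro y
    rw [hf1]
    show c + f0 y = _
    rw [hf0y y, hc]
    push_cast
    ring
  have h2half : (2 : ℤ) * ((a - 1) / 2) = a - 1 := by
    obtain ⟨t, rfl⟩ := hodd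
    omega
  have hmain : ∀ p : Bool × ZMod m, e (P p) = (a : ZMod (2 * m)) * e p := by
    rintro ⟨b, y⟩
    cases b
    · have hPp : P (false, y) = (false, f0 y) := by
        rw [hP]
        show (Equiv.Perm.prodExtendRight false f0)
          ((Equiv.Perm.prodExtendRight true f1) (false, y)) = _
        rw [Equiv.Perm.prodExtendRight_apply_ne _ (by decide) y,
          Equiv.Perm.prodExtendRight_apply_eq]
      rw [hPp, heapp, heapp, hefun]
      show ((2 * (f0 y).val + cond false 1 0 : ℕ) : ZMod (2 * m))
        = (a : ZMod (2 * m)) * ((2 * y.val + cond false 1 0 : ℕ) : ZMod (2 * m))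
      have hy : ((y.val : ℕ) : ZMod m) = y := ZMod.natCast_rightInverse y
      rw [hf0y y]
      simp only [cond, Nat.add_zero]
      rw [key (a * (y.val : ℤ))]
      have h4 : ((2 * y.val : ℕ) : ZMod (2 * m)) = ((2 * (y.val : ℤ) : ℤ) : ZMod (2 * m)) := by
        push_cast; ring
      rw [h4, ← Int.cast_mul]
      congr 1
      ring
    · have hPp : P (true, y) = (true, f1 y) := by
        rw [hP]
        show (Equiv.Perm.prodExtendRight false f0)
          ((Equiv.Perm.prodExtendRight true f1) (true, y)) = _
        rw [Equiv.Perm.prodExtendRight_apply_eq,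
          Equiv.Perm.prodExtendRight_apply_ne _ (by decide)]
      rw [hPp, heapp, heapp, hefun]
      show ((2 * (f1 y).val + cond true 1 0 : ℕ) : ZMod (2 * m))
        = (a : ZMod (2 * m)) * ((2 * y.val + cond true 1 0 : ℕ) : ZMod (2 * m))
      rw [hf1y y]
      simp only [cond]
      set z : ℤ := (a - 1) / 2 + a * (y.val : ℤ) with hz
      have h5a : ((2 * (((z : ZMod m))).val + 1 : ℕ) : ZMod (2 * m))
          = ((2 * (((z : ZMod m))).val : ℕ) : ZMod (2 * m)) + 1 := by push_cast; ring
      rw [h5a, key z]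
      have h6 : (2 * z : ℤ) = a * (2 * (y.val : ℤ) + 1) - 1 := by rw [hz, mul_add, h2half]; ring
      rw [h6]
      have h7 : ((2 * y.val + 1 : ℕ) : ZMod (2 * m)) = ((2 * (y.val : ℤ) + 1 : ℤ) : ZMod (2 * m)) := by
        push_cast; ring
      rw [h7, ← Int.cast_mul]
      push_cast
      ring
  have hE : Units.mulLeft hu.unit = e.permCongr P := by
    apply Equiv.ext
    intro x
    have h8 := hmain (e.symm x)
    rw [Equiv.apply_symm_apply] at h8
    show (hu.unit : ZMod (2 * m)) * x = _
    rw [Equiv.permCongr_apply, h8, IsUnit.unit_spec]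
  rw [hE, Equiv.Perm.sign_permCongr, hP, map_mul, Equiv.Perm.sign_prodExtendRight,
    Equiv.Perm.sign_prodExtendRight, hf1, map_mul,
    mul_comm (Equiv.Perm.sign f0), mul_assoc, Int.units_mul_self, mul_one,
    sign_addLeft_int m hme]

/-- For a finite cyclic group `G` of order `n` with `4 ∣ n` and any integer `a` coprime
to `n`, the sign of the permutation of `G` induced by `g ↦ g^a` is `(-1)^((a-1)/2)`. -/
theorem cyclic_pow_perm_sign (G : Type*) [Group G] [Fintype G] [IsCyclic G]
    (hn : 4 ∣ Fintype.card G) (a : ℤ) (ha : IsCoprime a (Fintype.card G : ℤ)) :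
    ∃ σ : Equiv.Perm G, (∀ g : G, σ g = g ^ a) ∧
      Equiv.Perm.sign σ = (-1 : ℤˣ) ^ ((a - 1) / 2) := by
  obtain ⟨u, v, huv⟩ := ha
  set N := Fintype.card G with hN
  haveI : NeZero N := ⟨(Fintype.card_pos).ne'⟩
  have hgN : ∀ g : G, g ^ (N : ℤ) = 1 := fun g => by
    rw [zpow_natCast, pow_card_eq_one]
  have hau : ∀ g : G, g ^ (a * u) = g := by
    intro g
    have h1 : a * u = 1 + (N : ℤ) * (-v) := by linarith [huv]
    rw [h1, zpow_add, zpow_one, zpow_mul, hgN, one_zpow, mul_one]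
  set σ : Equiv.Perm G :=
    ⟨fun g => g ^ a, fun g => g ^ u,
      fun g => by simp only; rw [← zpow_mul, hau],
      fun g => by simp only; rw [← zpow_mul, mul_comm u a, hau]⟩ with hσ
  refine ⟨σ, fun g => rfl, ?_⟩
  -- the unit
  have hu : IsUnit ((a : ZMod N)) := by
    refine IsUnit.of_mul_eq_one ((u : ZMod N)) ?_
    have h2 : ((u * a + v * (N : ℤ) : ℤ) : ZMod N) = ((1 : ℤ) : ZMod N) := by rw [huv]
    push_cast at h2
    rw [ZMod.natCast_self, mul_zero, add_zero] at h2
    rw [mul_comm]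
    exact h2
  -- oddness
  have hodd : Odd a := by
    rw [← Int.not_even_iff_odd]
    intro hae
    obtain ⟨k4, hk4⟩ := hn
    have h2 : (2 : ℤ) ∣ a := hae.two_dvd
    have h3n : (2 : ℕ) ∣ N := ⟨2 * k4, by omega⟩
    have h3 : (2 : ℤ) ∣ (N : ℤ) := by exact_mod_cast h3n
    have h4 : (2 : ℤ) ∣ 1 := huv ▸ dvd_add (h2.mul_left u) (h3.mul_left v)
    norm_num at h4
  -- transport
  have e' : Multiplicative (ZMod N) ≃* G := by
    have hcc : Nat.card G = N := Nat.card_eq_fintype_card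
    rw [← hcc]
    exact zmodCyclicMulEquiv ‹IsCyclic G›
  set E : ZMod N ≃ G := Multiplicative.ofAdd.trans e'.toEquiv with hE
  have hmu : E.symm.permCongr σ = Units.mulLeft hu.unit := by
    apply Equiv.ext
    intro x
    rw [Equiv.permCongr_apply]
    have h5 : σ (E.symm.symm x) = (E x) ^ a := rfl
    rw [h5]
    have h6 : E x = e' (Multiplicative.ofAdd x) := rfl
    rw [h6, ← map_zpow]
    have h7 : E.symm (e' (Multiplicative.ofAdd x ^ a)) =
        Multiplicative.toAdd (Multiplicative.ofAdd x ^ a) := by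
      rw [hE]
      simp
    rw [h7, toAdd_zpow]
    simp only [toAdd_ofAdd]
    rw [zsmul_eq_mul, Units.mulLeft_apply, IsUnit.unit_spec]
  obtain ⟨k4, hk4⟩ := hn
  have hsign := sign_mul_zmod N (2 * k4) (by omega) (by
      have : 0 < N := Fintype.card_pos
      omega) ⟨k4, by ring⟩ a hodd hu
  rw [← hmu, Equiv.Perm.sign_permCongr] at hsign
  exact hsign
end
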